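/- Let ρ ∈ (0,1) and let S ∈ ℝ^{m×n} be any matrix such that ‖C_S − I_d‖₂ ≤ √ρ. Then for any x_0 ∈ ℝ^d, the iterative Hessian sketch iterates x_{t+1} = x_t − (1−ρ) · H_S⁻¹ ∇f(x_t) satisfy δ_{x_t} ≤ ρ^t · δ_{x_0} for all t ≥ 0. -/

import Mathlib

open Matrix MeasureTheory ProbabilityTheory Real Polynomial
open scoped Classical

noncomputable section

/-- Spectral (operator) norm of a real matrix, via its action on Euclidean space. -/
def matSpectralNorm {k l : ℕ} (M : Matrix (Fin k) (Fin l) ℝ) : ℝ :=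
  ‖LinearMap.toContinuousLinearMap (Matrix.toEuclideanLin M)‖

/-- Positive semidefinite square root of a matrix (junk value `0` if `M` is not
positive semidefinite). -/
def msqrt {d : ℕ} (M : Matrix (Fin d) (Fin d) ℝ) : Matrix (Fin d) (Fin d) ℝ :=
  if h : M.PosSemidef then
    (h.1.eigenvectorUnitary : Matrix (Fin d) (Fin d) ℝ) *
      diagonal ((RCLike.ofReal : ℝ → ℝ) ∘ Real.sqrt ∘ h.1.eigenvalues) *
      (star h.1.eigenvectorUnitary : Matrix (Fin d) (Fin d) ℝ)
  else 0

/-- The Hessian `H = Aᵀ A + ν² Λ`. -/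
def Hmat {n d : ℕ} (A : Matrix (Fin n) (Fin d) ℝ) (ν : ℝ)
    (Λ : Matrix (Fin d) (Fin d) ℝ) : Matrix (Fin d) (Fin d) ℝ :=
  Aᵀ * A + ν ^ 2 • Λ

/-- The sketched Hessian `H_S = Aᵀ Sᵀ S A + ν² Λ`. -/
def HSmat {n d m : ℕ} (A : Matrix (Fin n) (Fin d) ℝ) (ν : ℝ)
    (Λ : Matrix (Fin d) (Fin d) ℝ) (S : Matrix (Fin m) (Fin n) ℝ) :
    Matrix (Fin d) (Fin d) ℝ :=
  Aᵀ * Sᵀ * S * A + ν ^ 2 • Λ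

/-- `C_S = H^{-1/2} H_S H^{-1/2}`. -/
def CSmat {n d m : ℕ} (A : Matrix (Fin n) (Fin d) ℝ) (ν : ℝ)
    (Λ : Matrix (Fin d) (Fin d) ℝ) (S : Matrix (Fin m) (Fin n) ℝ) :
    Matrix (Fin d) (Fin d) ℝ :=
  (msqrt (Hmat A ν Λ))⁻¹ * HSmat A ν Λ S * (msqrt (Hmat A ν Λ))⁻¹

/-- The minimizer `x* = H⁻¹ b`. -/
def xstar {n d : ℕ} (A : Matrix (Fin n) (Fin d) ℝ) (ν : ℝ)
    (Λ : Matrix (Fin d) (Fin d) ℝ) (b : Fin d → ℝ) : Fin d → ℝ :=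
  (Hmat A ν Λ)⁻¹.mulVec b

/-- The gradient `∇f(x) = H x - b`. -/
def gradf {n d : ℕ} (A : Matrix (Fin n) (Fin d) ℝ) (ν : ℝ)
    (Λ : Matrix (Fin d) (Fin d) ℝ) (b : Fin d → ℝ) (x : Fin d → ℝ) : Fin d → ℝ :=
  (Hmat A ν Λ).mulVec x - b

/-- The exact error `δ_x = (1/2)(x - x*)ᵀ H (x - x*)`. -/
def deltaEx {n d : ℕ} (A : Matrix (Fin n) (Fin d) ℝ) (ν : ℝ)
    (Λ : Matrix (Fin d) (Fin d) ℝ) (b : Fin d → ℝ) (x : Fin d → ℝ) : ℝ :=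
  (1 / 2) * ((x - xstar A ν Λ b) ⬝ᵥ (Hmat A ν Λ).mulVec (x - xstar A ν Λ b))

/-- The approximate Newton decrement `δ̃_x = (1/2) ∇f(x)ᵀ H_S⁻¹ ∇f(x)`. -/
def deltaApx {n d m : ℕ} (A : Matrix (Fin n) (Fin d) ℝ) (ν : ℝ)
    (Λ : Matrix (Fin d) (Fin d) ℝ) (b : Fin d → ℝ)
    (S : Matrix (Fin m) (Fin n) ℝ) (x : Fin d → ℝ) : ℝ :=
  (1 / 2) * (gradf A ν Λ b x ⬝ᵥ (HSmat A ν Λ S)⁻¹.mulVec (gradf A ν Λ b x))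

/-!
In the coordinates `u = H^{1/2} (x - x*)` one has `δ_x = ‖u‖² / 2`, and with `w = C_S⁻¹ u` an
iteration maps `u = C_S w` to `(C_S - (1 - ρ)) w`. Writing `C_S = I + B` with `‖B‖₂² ≤ ρ`, the
inequality `‖B w + ρ w‖² ≤ ρ ‖B w + w‖²` is equivalent to `(1 - ρ) (‖B w‖² - ρ ‖w‖²) ≤ 0`, so each
iteration contracts `δ` by the factor `ρ`.
-/

lemma dotProduct_self_eq_norm_sq {ι : Type*} [Fintype ι] (v : ι → ℝ) :
    v ⬝ᵥ v = ‖WithLp.toLp 2 v‖ ^ 2 := by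
  rw [← real_inner_self_eq_norm_sq, EuclideanSpace.inner_toLp_toLp, star_trivial]

lemma mulVec_dotProduct_self_le {k l : ℕ} (M : Matrix (Fin k) (Fin l) ℝ) (v : Fin l → ℝ) :
    (M *ᵥ v) ⬝ᵥ (M *ᵥ v) ≤ matSpectralNorm M ^ 2 * (v ⬝ᵥ v) := by
  have h : ‖WithLp.toLp 2 (M *ᵥ v)‖ ≤ matSpectralNorm M * ‖WithLp.toLp 2 v‖ :=
    (LinearMap.toContinuousLinearMap (toEuclideanLin M)).le_opNorm (WithLp.toLp 2 v)
  rw [dotProduct_self_eq_norm_sq, dotProduct_self_eq_norm_sq, ← mul_pow]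
  exact pow_le_pow_left₀ (norm_nonneg _) h 2

lemma dotProduct_self_add_smul_le {ι : Type*} [Fintype ι] {ρ : ℝ} (hρ : ρ ≤ 1)
    {u w : ι → ℝ} (h : u ⬝ᵥ u ≤ ρ * (w ⬝ᵥ w)) :
    (u + ρ • w) ⬝ᵥ (u + ρ • w) ≤ ρ * ((u + w) ⬝ᵥ (u + w)) := by
  have hcomm : w ⬝ᵥ u = u ⬝ᵥ w := dotProduct_comm w u
  simp only [dotProduct_add, add_dotProduct, dotProduct_smul, smul_dotProduct, smul_eq_mul]
  nlinarith [mul_le_mul_of_nonneg_left h (sub_nonneg.mpr hρ)]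

lemma msqrt_eq_cfc {d : ℕ} {H : Matrix (Fin d) (Fin d) ℝ} (hH : H.PosSemidef) :
    msqrt H = cfc Real.sqrt H := by
  rw [msqrt, dif_pos hH, hH.1.cfc_eq, IsHermitian.cfc, Unitary.conjStarAlgAut_apply]

lemma msqrt_mul_self {d : ℕ} {H : Matrix (Fin d) (Fin d) ℝ} (hH : H.PosSemidef) :
    msqrt H * msqrt H = H := by
  rw [msqrt_eq_cfc hH, ← cfc_mul Real.sqrt Real.sqrt H]
  conv_rhs => rw [← cfc_id' ℝ H hH.1]
  refine cfc_congr fun x hx => Real.mul_self_sqrt ?_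
  obtain ⟨i, rfl⟩ := hH.1.spectrum_real_eq_range_eigenvalues ▸ hx
  exact hH.eigenvalues_nonneg i

lemma transpose_msqrt {d : ℕ} {H : Matrix (Fin d) (Fin d) ℝ} (hH : H.PosSemidef) :
    (msqrt H)ᵀ = msqrt H := by
  rw [msqrt_eq_cfc hH, ← conjTranspose_eq_transpose_of_trivial]
  exact cfc_predicate Real.sqrt H

lemma HSmat_eq_Hmat {n d m : ℕ} (A : Matrix (Fin n) (Fin d) ℝ) (ν : ℝ)
    (Λ : Matrix (Fin d) (Fin d) ℝ) (S : Matrix (Fin m) (Fin n) ℝ) :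
    HSmat A ν Λ S = Hmat (S * A) ν Λ := by
  rw [HSmat, Hmat, transpose_mul]
  simp only [Matrix.mul_assoc]

lemma posDef_Hmat {n d : ℕ} (A : Matrix (Fin n) (Fin d) ℝ) {ν : ℝ} (hν : ν ≠ 0)
    {Λ : Matrix (Fin d) (Fin d) ℝ} (hΛ : (Λ - 1).PosSemidef) :
    (Hmat A ν Λ).PosDef := by
  have hΛ' : Λ.PosDef := sub_add_cancel Λ 1 ▸ PosDef.posSemidef_add hΛ .one
  have hAA : (Aᵀ * A).PosSemidef := by
    simpa [conjTranspose_eq_transpose_of_trivial] using posSemidef_conjTranspose_mul_self A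
  exact PosDef.posSemidef_add hAA (hΛ'.smul (by positivity))

lemma gradf_eq_mulVec_sub_xstar {n d : ℕ} {A : Matrix (Fin n) (Fin d) ℝ} {ν : ℝ}
    {Λ : Matrix (Fin d) (Fin d) ℝ} (hH : IsUnit (Hmat A ν Λ).det) (b x : Fin d → ℝ) :
    gradf A ν Λ b x = Hmat A ν Λ *ᵥ (x - xstar A ν Λ b) := by
  rw [gradf, xstar, mulVec_sub, mulVec_mulVec, mul_nonsing_inv _ hH, one_mulVec]

lemma dotProduct_mul_self_mulVec {d : ℕ} {M : Matrix (Fin d) (Fin d) ℝ} (hM : Mᵀ = M)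
    (v : Fin d → ℝ) : v ⬝ᵥ (M * M) *ᵥ v = (M *ᵥ v) ⬝ᵥ (M *ᵥ v) := by
  rw [← mulVec_mulVec, dotProduct_mulVec]
  nth_rw 1 [← hM]
  rw [vecMul_transpose]

lemma deltaEx_eq_msqrt {n d : ℕ} {A : Matrix (Fin n) (Fin d) ℝ} {ν : ℝ}
    {Λ : Matrix (Fin d) (Fin d) ℝ} (hH : (Hmat A ν Λ).PosSemidef) (b x : Fin d → ℝ) :
    deltaEx A ν Λ b x = 1 / 2 * ((msqrt (Hmat A ν Λ) *ᵥ (x - xstar A ν Λ b)) ⬝ᵥ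
      (msqrt (Hmat A ν Λ) *ᵥ (x - xstar A ν Λ b))) := by
  rw [deltaEx, ← dotProduct_mul_self_mulVec (transpose_msqrt hH), msqrt_mul_self hH]

theorem dotProduct_self_sketchedStep_le {d : ℕ} {M Hs : Matrix (Fin d) (Fin d) ℝ}
    (hM : IsUnit M.det) (hHs : IsUnit Hs.det) {ρ : ℝ} (hρ0 : 0 ≤ ρ) (hρ1 : ρ ≤ 1)
    (hC : matSpectralNorm (M⁻¹ * Hs * M⁻¹ - 1) ≤ √ρ) (e : Fin d → ℝ) :
    (M *ᵥ (e - (1 - ρ) • Hs⁻¹ *ᵥ (M * M) *ᵥ e)) ⬝ᵥ (M *ᵥ (e - (1 - ρ) • Hs⁻¹ *ᵥ (M * M) *ᵥ e))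
      ≤ ρ * ((M *ᵥ e) ⬝ᵥ (M *ᵥ e)) := by
  set C := M⁻¹ * Hs * M⁻¹
  have hC_inv : C⁻¹ = M * Hs⁻¹ * M := by
    simp only [C, Matrix.mul_inv_rev, nonsing_inv_nonsing_inv _ hM, Matrix.mul_assoc]
  have hC_unit : IsUnit C.det := by
    simp only [C, det_mul, det_nonsing_inv]
    exact ((hM.ringInverse).mul hHs).mul hM.ringInverse
  set w := C⁻¹ *ᵥ M *ᵥ e
  have h_old : M *ᵥ e = (C - 1) *ᵥ w + w := by
    rw [sub_mulVec, one_mulVec, sub_add_cancel, mulVec_mulVec, mul_nonsing_inv _ hC_unit,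
      one_mulVec]
  have h_new : M *ᵥ (e - (1 - ρ) • Hs⁻¹ *ᵥ (M * M) *ᵥ e) = (C - 1) *ᵥ w + ρ • w := by
    rw [mulVec_sub, mulVec_smul, mulVec_mulVec, mulVec_mulVec, ← Matrix.mul_assoc,
      ← mulVec_mulVec, ← hC_inv]
    change M *ᵥ e - (1 - ρ) • w = _
    rw [h_old]
    module
  have hB : ((C - 1) *ᵥ w) ⬝ᵥ ((C - 1) *ᵥ w) ≤ ρ * (w ⬝ᵥ w) := by
    refine (mulVec_dotProduct_self_le _ w).trans (mul_le_mul_of_nonneg_right ?_ ?_)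
    · exact (pow_le_pow_left₀ (norm_nonneg _) hC 2).trans_eq (Real.sq_sqrt hρ0)
    · rw [dotProduct_self_eq_norm_sq]; positivity
  rw [h_new, h_old]
  exact dotProduct_self_add_smul_le hρ1 hB

theorem stmt5_general {n d m : ℕ}
    (A : Matrix (Fin n) (Fin d) ℝ) (b : Fin d → ℝ)
    (Λ : Matrix (Fin d) (Fin d) ℝ)
    (hΛ : (Λ - 1).PosSemidef) (ν : ℝ) (hν : 0 < ν)
    (ρ : ℝ) (hρ : ρ ∈ Set.Ioo (0 : ℝ) 1)
    (S : Matrix (Fin m) (Fin n) ℝ)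
    (hS : matSpectralNorm (CSmat A ν Λ S - 1) ≤ Real.sqrt ρ)
    (x : ℕ → Fin d → ℝ)
    (hx : ∀ t : ℕ, x (t + 1) =
      x t - (1 - ρ) • (HSmat A ν Λ S)⁻¹.mulVec (gradf A ν Λ b (x t))) :
    ∀ t : ℕ, deltaEx A ν Λ b (x t) ≤ ρ ^ t * deltaEx A ν Λ b (x 0) := by
  obtain ⟨hρ0, hρ1⟩ := hρ
  have hH := posDef_Hmat A hν.ne' hΛ
  have hHdet : IsUnit (Hmat A ν Λ).det := (isUnit_iff_isUnit_det _).mp hH.isUnit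
  have hHs : IsUnit (HSmat A ν Λ S).det := by
    rw [HSmat_eq_Hmat, ← isUnit_iff_isUnit_det]
    exact (posDef_Hmat (S * A) hν.ne' hΛ).isUnit
  set M := msqrt (Hmat A ν Λ)
  have hMM : M * M = Hmat A ν Λ := msqrt_mul_self hH.posSemidef
  have hM : IsUnit M.det := by
    refine isUnit_of_mul_isUnit_left (y := M.det) ?_
    rwa [← det_mul, hMM]
  have hstep (t : ℕ) : deltaEx A ν Λ b (x (t + 1)) ≤ ρ * deltaEx A ν Λ b (x t) := by
    have h_err : x (t + 1) - xstar A ν Λ b = (x t - xstar A ν Λ b) -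
        (1 - ρ) • (HSmat A ν Λ S)⁻¹ *ᵥ (M * M) *ᵥ (x t - xstar A ν Λ b) := by
      rw [hx, gradf_eq_mulVec_sub_xstar hHdet, hMM, sub_right_comm]
    rw [deltaEx_eq_msqrt hH.posSemidef, deltaEx_eq_msqrt hH.posSemidef, h_err]
    have := dotProduct_self_sketchedStep_le hM hHs hρ0.le hρ1.le hS (x t - xstar A ν Λ b)
    linarith
  exact fun t => le_geom (u := fun t => deltaEx A ν Λ b (x t)) hρ0.le t fun k _ => hstep k

/-- If `‖C_S - I‖₂ ≤ √ρ` with `ρ ∈ (0,1)`, the IHS iterates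
`x_{t+1} = x_t - (1-ρ)·H_S⁻¹∇f(x_t)` satisfy `δ_{x_t} ≤ ρ^t · δ_{x_0}`. -/
theorem stmt5 {n d m : ℕ} (hd : 1 ≤ d) (hdn : d ≤ n)
    (A : Matrix (Fin n) (Fin d) ℝ) (b : Fin d → ℝ)
    (Λ : Matrix (Fin d) (Fin d) ℝ) (hΛdiag : Λ.IsDiag)
    (hΛ : (Λ - 1).PosSemidef) (ν : ℝ) (hν : 0 < ν)
    (ρ : ℝ) (hρ : ρ ∈ Set.Ioo (0 : ℝ) 1)
    (S : Matrix (Fin m) (Fin n) ℝ)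
    (hS : matSpectralNorm (CSmat A ν Λ S - 1) ≤ Real.sqrt ρ)
    (x : ℕ → Fin d → ℝ)
    (hx : ∀ t : ℕ, x (t + 1) =
      x t - (1 - ρ) • (HSmat A ν Λ S)⁻¹.mulVec (gradf A ν Λ b (x t))) :
    ∀ t : ℕ, deltaEx A ν Λ b (x t) ≤ ρ ^ t * deltaEx A ν Λ b (x 0) :=
  stmt5_general A b Λ hΛ ν hν ρ hρ S hS x hx
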